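/- arXiv:1807.10960 — 7 statements merged into one kernel-verified Lean document; each statement's English description precedes it below -/
import Mathlib

section
/- Let 𝒳 be a real Hilbert space and ρ : 𝒳 → [0,∞) a continuous seminorm. For every f ∈ 𝒳, setting f₀ = f − P_{K_ρ} f where P_{K_ρ} is the orthogonal projection onto K_ρ, the set of minimizers over 𝒳 of x ↦ ρ(f − x) + ρ*(x) is equal to the set of minimizers over G of x ↦ ρ_G(f₀ − x) + ρ_G*(x). -/
/-!
Since `ρ` vanishes on `K`, `ρ (f - x) = ρ (f₀ - x)`. The transform `ρ*` is `+∞` off `Kᗮ`: there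
`⟪x, ·⟫` is unbounded on a line in `K`, on which `ρ` vanishes. On `Kᗮ` the supremum defining `ρ*`
may be taken over `Kᗮ` alone, since replacing `w` by its component in `Kᗮ` changes neither
`⟪x, w⟫` nor `ρ w`. As `ρ* 0 ≤ 0` is finite, every minimizer lies in `Kᗮ`, where the two objectives
agree.
-/

open scoped RealInnerProductSpace

section

variable {E : Type*} [NormedAddCommGroup E] [InnerProductSpace ℝ E]

noncomputable def legendreTransform (ρ : E → ℝ) (x : E) : EReal :=
  ⨆ w : E, ((⟪x, w⟫ - ρ w : ℝ) : EReal)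

noncomputable def legendreTransformOn (ρ : E → ℝ) (G : Submodule ℝ E) (x : E) : EReal :=
  ⨆ w : G, ((⟪x, (w : E)⟫ - ρ w : ℝ) : EReal)

namespace Seminorm

variable (p : Seminorm ℝ E) {K : Submodule ℝ E}

theorem map_add_eq_left {x k : E} (hk : p k = 0) : p (x + k) = p x :=
  le_antisymm (by simpa [hk] using map_add_le_add p x k)
    (by simpa [hk] using map_sub_le_add p (x + k) k)

theorem legendreTransform_zero_le : legendreTransform p 0 ≤ 0 :=
  iSup_le fun w => EReal.coe_nonpos.2 (by simp)

theorem legendreTransform_eq_top_of_notMem_orthogonal (hK : ∀ k ∈ K, p k = 0) {x : E}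
    (hx : x ∉ Kᗮ) : legendreTransform p x = ⊤ := by
  obtain ⟨u, hu, hxu⟩ : ∃ u ∈ K, ⟪x, u⟫ ≠ 0 := by
    simpa [Submodule.mem_orthogonal'] using hx
  -- `p` vanishes on the whole line through `u`, along which `⟪x, ·⟫` is unbounded.
  refine iSup_eq_top.2 fun b hb => ?_
  obtain ⟨r, hbr, -⟩ := EReal.exists_between_coe_real hb
  refine ⟨(r / ⟪x, u⟫) • u, ?_⟩
  rwa [real_inner_smul_right, div_mul_cancel₀ _ hxu, map_smul_eq_mul, hK u hu, mul_zero,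
    sub_zero]

theorem legendreTransform_eq_legendreTransformOn [K.HasOrthogonalProjection]
    (hK : ∀ k ∈ K, p k = 0) {x : E} (hx : x ∈ Kᗮ) :
    legendreTransform p x = legendreTransformOn p Kᗮ x := by
  refine le_antisymm (iSup_le fun w => ?_) (iSup_le fun w => le_iSup_of_le (w : E) le_rfl)
  have hPw : K.starProjection w ∈ K := K.starProjection_apply_mem w
  refine le_iSup_of_le ⟨w - K.starProjection w, K.sub_starProjection_mem_orthogonal w⟩ ?_
  dsimp only
  rw [inner_sub_right, Submodule.inner_left_of_mem_orthogonal hPw hx, sub_zero, sub_eq_add_neg w,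
    p.map_add_eq_left (by rw [map_neg_eq_map, hK _ hPw])]

theorem minimizers_legendreTransform_eq [K.HasOrthogonalProjection] (hK : ∀ k ∈ K, p k = 0)
    {f f₀ : E} (hf : f - f₀ ∈ K) :
    {x | ∀ z, (p (f - x) : EReal) + legendreTransform p x ≤ p (f - z) + legendreTransform p z}
      = {x | x ∈ Kᗮ ∧ ∀ z ∈ Kᗮ, (p (f₀ - x) : EReal) + legendreTransformOn p Kᗮ x
          ≤ p (f₀ - z) + legendreTransformOn p Kᗮ z} := by
  have hpf (x : E) : p (f - x) = p (f₀ - x) := by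
    rw [show f - x = f₀ - x + (f - f₀) by abel, p.map_add_eq_left (hK _ hf)]
  have hTop {x : E} (hx : x ∉ Kᗮ) (a : ℝ) : (a : EReal) + legendreTransform p x = ⊤ := by
    rw [p.legendreTransform_eq_top_of_notMem_orthogonal hK hx,
      EReal.add_top_of_ne_bot (EReal.coe_ne_bot a)]
  ext x
  simp only [Set.mem_ofPred_eq, hpf]
  constructor
  · intro hmin
    have hxK : x ∈ Kᗮ := by
      by_contra hx
      have h0 : (p (f₀ - 0) : EReal) + legendreTransform p 0 ≤ p (f₀ - 0) :=
        add_le_of_nonpos_right p.legendreTransform_zero_le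
      exact EReal.coe_ne_top _ (top_le_iff.1 (hTop hx _ ▸ (hmin 0).trans h0))
    refine ⟨hxK, fun z hz => ?_⟩
    simpa only [p.legendreTransform_eq_legendreTransformOn hK hxK,
      p.legendreTransform_eq_legendreTransformOn hK hz] using hmin z
  · rintro ⟨hxK, hmin⟩ z
    by_cases hz : z ∈ Kᗮ
    · simpa only [p.legendreTransform_eq_legendreTransformOn hK hxK,
        p.legendreTransform_eq_legendreTransformOn hK hz] using hmin z hz
    · exact hTop hz _ ▸ le_top

end Seminorm

end

theorem stmt_3_general {𝒳 : Type*} [NormedAddCommGroup 𝒳] [InnerProductSpace ℝ 𝒳] [CompleteSpace 𝒳]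
    (ρ : 𝒳 → ℝ)
    (hρ_add : ∀ x y, ρ (x + y) ≤ ρ x + ρ y)
    (hρ_smul : ∀ (c : ℝ) (x : 𝒳), ρ (c • x) = |c| * ρ x)
    (hρ_cont : Continuous ρ)
    (K : Submodule ℝ 𝒳) (hK : (K : Set 𝒳) = {x : 𝒳 | ρ x = 0})
    (f f₀ : 𝒳) (hproj : f - f₀ ∈ K) :
    {x : 𝒳 | ∀ z : 𝒳,
        (↑(ρ (f - x)) : EReal) + (⨆ w : 𝒳, (((inner ℝ x w : ℝ) - ρ w : ℝ) : EReal))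
          ≤ (↑(ρ (f - z)) : EReal) + (⨆ w : 𝒳, (((inner ℝ z w : ℝ) - ρ w : ℝ) : EReal))}
      = {x : 𝒳 | x ∈ Kᗮ ∧ ∀ z ∈ Kᗮ,
          (↑(ρ (f₀ - x)) : EReal)
              + (⨆ w : Kᗮ, (((inner ℝ x (w : 𝒳) : ℝ) - ρ (w : 𝒳) : ℝ) : EReal))
            ≤ (↑(ρ (f₀ - z)) : EReal)
              + (⨆ w : Kᗮ, (((inner ℝ z (w : 𝒳) : ℝ) - ρ (w : 𝒳) : ℝ) : EReal))} := by
  let p : Seminorm ℝ 𝒳 := .of ρ hρ_add fun c x => by rw [hρ_smul, Real.norm_eq_abs]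
  have hKp (k : 𝒳) (hk : k ∈ K) : p k = 0 := hK.subset hk
  have : CompleteSpace K :=
    (hK ▸ isClosed_eq hρ_cont continuous_const : IsClosed (K : Set 𝒳)).completeSpace_coe
  exact p.minimizers_legendreTransform_eq hKp hproj

/-- Let `𝒳` be a real Hilbert space and `ρ : 𝒳 → [0,∞)` a continuous
seminorm. Let `K` be the subspace `K_ρ = {x | ρ x = 0}` and `G = Kᗮ`. For `f ∈ 𝒳`,
set `f₀ = f − P_K f` (characterized by `f₀ ∈ Kᗮ` and `f − f₀ ∈ K`). Then the set of
minimizers over `𝒳` of `x ↦ ρ(f − x) + ρ*(x)` equals the set of minimizers over `G`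
of `x ↦ ρ_G(f₀ − x) + ρ_G*(x)` (values in `EReal`; `ρ_G` is the restriction of `ρ`
to `G` and `ρ_G*` is its Legendre transform, the supremum being taken over `G`). -/
theorem stmt_3 {𝒳 : Type*} [NormedAddCommGroup 𝒳] [InnerProductSpace ℝ 𝒳] [CompleteSpace 𝒳]
    (ρ : 𝒳 → ℝ) (hρ_nonneg : ∀ x, 0 ≤ ρ x)
    (hρ_add : ∀ x y, ρ (x + y) ≤ ρ x + ρ y)
    (hρ_smul : ∀ (c : ℝ) (x : 𝒳), ρ (c • x) = |c| * ρ x)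
    (hρ_cont : Continuous ρ)
    (K : Submodule ℝ 𝒳) (hK : (K : Set 𝒳) = {x : 𝒳 | ρ x = 0})
    (f f₀ : 𝒳) (hf₀ : f₀ ∈ Kᗮ) (hproj : f - f₀ ∈ K) :
    {x : 𝒳 | ∀ z : 𝒳,
        (↑(ρ (f - x)) : EReal) + (⨆ w : 𝒳, (((inner ℝ x w : ℝ) - ρ w : ℝ) : EReal))
          ≤ (↑(ρ (f - z)) : EReal) + (⨆ w : 𝒳, (((inner ℝ z w : ℝ) - ρ w : ℝ) : EReal))}
      = {x : 𝒳 | x ∈ Kᗮ ∧ ∀ z ∈ Kᗮ,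
          (↑(ρ (f₀ - x)) : EReal)
              + (⨆ w : Kᗮ, (((inner ℝ x (w : 𝒳) : ℝ) - ρ (w : 𝒳) : ℝ) : EReal))
            ≤ (↑(ρ (f₀ - z)) : EReal)
              + (⨆ w : Kᗮ, (((inner ℝ z (w : 𝒳) : ℝ) - ρ (w : 𝒳) : ℝ) : EReal))} :=
  stmt_3_general ρ hρ_add hρ_smul hρ_cont K hK f f₀ hproj
end

section
/- For every f ∈ X there exists f₀ ∈ G_d such that the set of minimizers over X of x ↦ J_d(f − x) + J_d*(x) equals the set of minimizers over G_d of x ↦ T_d(f₀ − x) + T_d*(x), where J_d*(y) = sup{⟨y, w⟩ − J_d(w) : w ∈ X} and T_d*(y) = sup{⟨y, w⟩ − J_d(w) : w ∈ G_d}. -/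
open scoped BigOperators

/-- First component of the discrete gradient: `(∇u)¹_{ij} = u_{i+1,j} − u_{ij}` for
`i < N` and `0` for `i = N`. -/
noncomputable def gradX {N : ℕ} (u : Matrix (Fin N) (Fin N) ℝ) (i j : Fin N) : ℝ :=
  if h : (i : ℕ) + 1 < N then u ⟨(i : ℕ) + 1, h⟩ j - u i j else 0

/-- Second component of the discrete gradient: `(∇u)²_{ij} = u_{i,j+1} − u_{ij}` for
`j < N` and `0` for `j = N`. -/
noncomputable def gradY {N : ℕ} (u : Matrix (Fin N) (Fin N) ℝ) (i j : Fin N) : ℝ :=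
  if h : (j : ℕ) + 1 < N then u i ⟨(j : ℕ) + 1, h⟩ - u i j else 0

/-- Discrete total variation `J_d(u) = Σ_{i,j} ‖(∇u)_{ij}‖`
(Euclidean norm on `ℝ²`). -/
noncomputable def Jd {N : ℕ} (u : Matrix (Fin N) (Fin N) ℝ) : ℝ :=
  ∑ i, ∑ j, Real.sqrt (gradX u i j ^ 2 + gradY u i j ^ 2)

/-- The subspace `G_d = {u ∈ X : Σ_{i,j} u_{ij} = 0}`. -/
def Gd (N : ℕ) : Set (Matrix (Fin N) (Fin N) ℝ) :=
  {u | ∑ i, ∑ j, u i j = 0}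

/-- Inner product on `X = ℝ^{N×N}`: `⟨u, v⟩ = Σ_{i,j} u_{ij} v_{ij}`. -/
def minner {N : ℕ} (u v : Matrix (Fin N) (Fin N) ℝ) : ℝ :=
  ∑ i, ∑ j, u i j * v i j

/-- Legendre transform of `J_d` over `X`: `J_d*(y) = sup {⟨y, w⟩ − J_d(w) : w ∈ X}`. -/
noncomputable def JdStar {N : ℕ} (y : Matrix (Fin N) (Fin N) ℝ) : EReal :=
  ⨆ w : Matrix (Fin N) (Fin N) ℝ, ((minner y w - Jd w : ℝ) : EReal)

/-- Legendre transform of the restriction `T_d` of `J_d` to `G_d`: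
`T_d*(y) = sup {⟨y, w⟩ − J_d(w) : w ∈ G_d}`. -/
noncomputable def TdStar {N : ℕ} (y : Matrix (Fin N) (Fin N) ℝ) : EReal :=
  ⨆ w : Gd N, ((minner y (w : Matrix (Fin N) (Fin N) ℝ)
      - Jd (w : Matrix (Fin N) (Fin N) ℝ) : ℝ) : EReal)

/-- Constant matrix. -/
def constM (N : ℕ) (c : ℝ) : Matrix (Fin N) (Fin N) ℝ := Matrix.of fun _ _ => c

lemma gradX_add_const {N : ℕ} (u : Matrix (Fin N) (Fin N) ℝ) (c : ℝ) :
    gradX (u + constM N c) = gradX u := by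
  funext i j; unfold gradX; split <;> simp [constM, Matrix.add_apply]

lemma gradY_add_const {N : ℕ} (u : Matrix (Fin N) (Fin N) ℝ) (c : ℝ) :
    gradY (u + constM N c) = gradY u := by
  funext i j; unfold gradY; split <;> simp [constM, Matrix.add_apply]

lemma Jd_add_const {N : ℕ} (u : Matrix (Fin N) (Fin N) ℝ) (c : ℝ) :
    Jd (u + constM N c) = Jd u := by
  unfold Jd; rw [gradX_add_const, gradY_add_const]

lemma Jd_nonneg {N : ℕ} (u : Matrix (Fin N) (Fin N) ℝ) : 0 ≤ Jd u := by
  unfold Jd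
  exact Finset.sum_nonneg fun i _ => Finset.sum_nonneg fun j _ => Real.sqrt_nonneg _

lemma Jd_zero {N : ℕ} : Jd (0 : Matrix (Fin N) (Fin N) ℝ) = 0 := by
  have hx : gradX (0 : Matrix (Fin N) (Fin N) ℝ) = fun _ _ => 0 := by
    funext i j; unfold gradX; split <;> simp
  have hy : gradY (0 : Matrix (Fin N) (Fin N) ℝ) = fun _ _ => 0 := by
    funext i j; unfold gradY; split <;> simp
  simp [Jd, hx, hy]

lemma sum_constM {N : ℕ} (c : ℝ) :
    ∑ i, ∑ j, constM N c i j = (N : ℝ) * ((N : ℝ) * c) := by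
  simp [constM, Finset.sum_const, nsmul_eq_mul]

lemma minner_add_const {N : ℕ} (x w : Matrix (Fin N) (Fin N) ℝ) (c : ℝ) :
    minner x (w + constM N c) = minner x w + c * ∑ i, ∑ j, x i j := by
  unfold minner
  rw [Finset.mul_sum, ← Finset.sum_add_distrib]
  refine Finset.sum_congr rfl fun i _ => ?_
  rw [Finset.mul_sum, ← Finset.sum_add_distrib]
  refine Finset.sum_congr rfl fun j _ => ?_
  simp [constM, Matrix.add_apply]; ring

lemma JdStar_eq_top {N : ℕ} (x : Matrix (Fin N) (Fin N) ℝ)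
    (hx : (∑ i, ∑ j, x i j) ≠ 0) : JdStar x = ⊤ := by
  rw [JdStar, iSup_eq_top]
  intro b hb
  induction b using EReal.rec with
  | bot => exact ⟨0, EReal.bot_lt_coe _⟩
  | coe r =>
      set S := ∑ i, ∑ j, x i j with hS
      refine ⟨constM N ((r + 1) / S), ?_⟩
      have h1 : minner x (constM N ((r + 1) / S)) = r + 1 := by
        have := minner_add_const x 0 ((r + 1) / S)
        simp only [zero_add] at this
        rw [this]
        have : minner x 0 = 0 := by unfold minner; simp
        rw [this, zero_add, ← hS]
        field_simp
      have h2 : Jd (constM N ((r + 1) / S)) = 0 := by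
        have := Jd_add_const (0 : Matrix (Fin N) (Fin N) ℝ) ((r + 1) / S)
        simpa [Jd_zero] using this
      rw [h1, h2]
      norm_num
      exact_mod_cast (by linarith : r < r + 1)
  | top => exact absurd hb (lt_irrefl _)

lemma JdStar_eq_TdStar {N : ℕ} (hN : 1 ≤ N) (x : Matrix (Fin N) (Fin N) ℝ)
    (hx : x ∈ Gd N) : JdStar x = TdStar x := by
  have hx' : (∑ i, ∑ j, x i j) = 0 := hx
  apply le_antisymm
  · rw [JdStar]
    apply iSup_le
    intro w
    set c : ℝ := (∑ i, ∑ j, w i j) / ((N : ℝ) * (N : ℝ)) with hc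
    set w₀ : Matrix (Fin N) (Fin N) ℝ := w - constM N c with hw₀
    have hNpos : (0 : ℝ) < (N : ℝ) * (N : ℝ) := by
      have : (0 : ℝ) < (N : ℝ) := by exact_mod_cast hN
      positivity
    have hww : w = w₀ + constM N c := by
      funext i j; simp [hw₀, Matrix.sub_apply, Matrix.add_apply]
    have hw₀G : w₀ ∈ Gd N := by
      show (∑ i, ∑ j, w₀ i j) = 0
      have : ∑ i, ∑ j, w₀ i j = (∑ i, ∑ j, w i j) - ((N:ℝ) * ((N:ℝ) * c)) := by
        simp only [hw₀, Matrix.sub_apply, Finset.sum_sub_distrib]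
        rw [sum_constM]
      rw [this, hc]
      field_simp
      ring
    have key : minner x w - Jd w = minner x w₀ - Jd w₀ := by
      rw [hww, minner_add_const, Jd_add_const, hx']
      ring_nf
    rw [key]
    exact le_iSup (fun w : Gd N => ((minner x (w : Matrix (Fin N) (Fin N) ℝ)
      - Jd (w : Matrix (Fin N) (Fin N) ℝ) : ℝ) : EReal)) ⟨w₀, hw₀G⟩
  · rw [TdStar]
    apply iSup_le
    intro w
    exact le_iSup (fun w : Matrix (Fin N) (Fin N) ℝ =>
      ((minner x w - Jd w : ℝ) : EReal)) (w : Matrix (Fin N) (Fin N) ℝ)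

lemma JdStar_zero {N : ℕ} : JdStar (0 : Matrix (Fin N) (Fin N) ℝ) = 0 := by
  apply le_antisymm
  · apply iSup_le
    intro w
    have : minner 0 w - Jd w ≤ 0 := by
      have h1 : minner (0 : Matrix (Fin N) (Fin N) ℝ) w = 0 := by unfold minner; simp
      have := Jd_nonneg w
      linarith
    exact_mod_cast this
  · have : ((minner (0 : Matrix (Fin N) (Fin N) ℝ) 0 - Jd (0 : Matrix (Fin N) (Fin N) ℝ) : ℝ) : EReal) = 0 := by
      have h1 : minner (0 : Matrix (Fin N) (Fin N) ℝ) 0 = 0 := by unfold minner; simp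
      rw [h1, Jd_zero]; norm_num
    calc (0 : EReal) = _ := this.symm
      _ ≤ JdStar 0 := le_iSup (fun w : Matrix (Fin N) (Fin N) ℝ =>
          ((minner (0 : Matrix (Fin N) (Fin N) ℝ) w - Jd w : ℝ) : EReal)) 0

/-- For every `f ∈ X` there exists `f₀ ∈ G_d` such that the set of
minimizers over `X` of `x ↦ J_d(f − x) + J_d*(x)` equals the set of minimizers over
`G_d` of `x ↦ T_d(f₀ − x) + T_d*(x)` (values in `EReal`). -/
theorem stmt_4 {N : ℕ} (hN : 1 ≤ N) (f : Matrix (Fin N) (Fin N) ℝ) :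
    ∃ f₀ ∈ Gd N,
      {x : Matrix (Fin N) (Fin N) ℝ | ∀ z : Matrix (Fin N) (Fin N) ℝ,
          (↑(Jd (f - x)) : EReal) + JdStar x ≤ (↑(Jd (f - z)) : EReal) + JdStar z}
        = {x : Matrix (Fin N) (Fin N) ℝ | x ∈ Gd N ∧ ∀ z ∈ Gd N,
            (↑(Jd (f₀ - x)) : EReal) + TdStar x ≤ (↑(Jd (f₀ - z)) : EReal) + TdStar z} := by
  have hNpos : (0 : ℝ) < (N : ℝ) * (N : ℝ) := by
    have : (0 : ℝ) < (N : ℝ) := by exact_mod_cast hN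
    positivity
  set c : ℝ := (∑ i, ∑ j, f i j) / ((N : ℝ) * (N : ℝ)) with hc
  set f₀ : Matrix (Fin N) (Fin N) ℝ := f - constM N c with hf₀
  have hf₀G : f₀ ∈ Gd N := by
    show (∑ i, ∑ j, f₀ i j) = 0
    have : ∑ i, ∑ j, f₀ i j = (∑ i, ∑ j, f i j) - ((N:ℝ) * ((N:ℝ) * c)) := by
      simp only [hf₀, Matrix.sub_apply, Finset.sum_sub_distrib]
      rw [sum_constM]
    rw [this, hc]; field_simp; ring
  have hJd : ∀ y : Matrix (Fin N) (Fin N) ℝ, Jd (f - y) = Jd (f₀ - y) := by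
    intro y
    have : f - y = (f₀ - y) + constM N c := by
      funext i j; simp [hf₀, Matrix.sub_apply, Matrix.add_apply]; ring
    rw [this, Jd_add_const]
  refine ⟨f₀, hf₀G, ?_⟩
  ext x
  simp only [Set.mem_setOf_eq]
  constructor
  · intro h
    have hxG : x ∈ Gd N := by
      by_contra hxG
      have htop : JdStar x = ⊤ := JdStar_eq_top x hxG
      have h0 := h 0
      rw [htop] at h0
      have hL : (↑(Jd (f - x)) : EReal) + ⊤ = ⊤ := by
        rw [EReal.add_top_of_ne_bot (by exact EReal.coe_ne_bot _)]
      rw [hL, top_le_iff, JdStar_zero] at h0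
      have : (↑(Jd (f - 0)) : EReal) + 0 ≠ ⊤ := by
        rw [add_zero]; exact EReal.coe_ne_top _
      exact this h0
    refine ⟨hxG, fun z hzG => ?_⟩
    have := h z
    rwa [hJd x, hJd z, JdStar_eq_TdStar hN x hxG, JdStar_eq_TdStar hN z hzG] at this
  · rintro ⟨hxG, h⟩
    intro z
    by_cases hzG : z ∈ Gd N
    · have := h z hzG
      rwa [hJd x, hJd z, JdStar_eq_TdStar hN x hxG, JdStar_eq_TdStar hN z hzG]
    · have htop : JdStar z = ⊤ := JdStar_eq_top z hzG
      rw [htop, EReal.add_top_of_ne_bot (by exact EReal.coe_ne_bot _)]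
      exact le_top
end

section
/- Let E be a finite-dimensional real inner product space, ρ a norm on E, and D = {x ∈ E : ρ°(x) ≤ 1}. If x₀ ∉ D and D is strictly convex (every boundary point of D is an extreme point of D), then x ↦ ρ(x₀ − x) admits a unique minimizer over D. -/
/-!
The polar `D` is an intersection of closed half-spaces, and it is bounded because the unit ball of
`ρ` contains a Euclidean ball; so `D` is compact and the continuous function `ρ (x₀ - ·)` attains
its minimum on it. If two minimizers were distinct, their midpoint would again be a minimizer (by
convexity of `D` and of `ρ`) and, by strict convexity, an interior point of `D`. But from an
interior minimizer `x` one can move a little towards `x₀` inside `D`, which multiplies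
`ρ (x₀ - x) > 0` by a factor `1 - t < 1`.
-/

/-- Dual norm `ρ°(y) = max {x·y : x ∈ E, ρ(x) ≤ 1}` of a norm `ρ` on a real inner
product space `E`. -/
noncomputable def dualNorm {E : Type*} [NormedAddCommGroup E] [InnerProductSpace ℝ E]
    (ρ : E → ℝ) (y : E) : ℝ :=
  sSup {r : ℝ | ∃ x : E, ρ x ≤ 1 ∧ r = (inner ℝ x y : ℝ)}

open Set Filter Topology
open scoped InnerProductSpace

section FiniteDimensional

variable {E : Type*} [NormedAddCommGroup E] [NormedSpace ℝ E] [FiniteDimensional ℝ E]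

theorem Seminorm.continuous_of_finiteDimensional (p : Seminorm ℝ E) : Continuous p :=
  continuousOn_univ.mp (p.convexOn.continuousOn isOpen_univ)

theorem Seminorm.exists_pos_mul_norm_le (p : Seminorm ℝ E) (hp : ∀ x, p x = 0 → x = 0) :
    ∃ c > 0, ∀ x, c * ‖x‖ ≤ p x := by
  rcases subsingleton_or_nontrivial E with hE | hE
  · exact ⟨1, one_pos, fun x => by simp [Subsingleton.elim x 0]⟩
  obtain ⟨u, hu, hmin⟩ := (isCompact_sphere (0 : E) 1).exists_isMinOn
    (NormedSpace.sphere_nonempty.mpr zero_le_one) p.continuous_of_finiteDimensional.continuousOn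
  have hu0 : u ≠ 0 := ne_zero_of_mem_sphere one_ne_zero ⟨u, hu⟩
  refine ⟨p u, (apply_nonneg p u).lt_of_ne' (mt (hp u) hu0), fun x => ?_⟩
  rcases eq_or_ne x 0 with rfl | hx
  · simp
  have hx' : 0 < ‖x‖ := norm_pos_iff.mpr hx
  have h : p u ≤ p (‖x‖⁻¹ • x) := hmin (by simp [norm_smul, hx'.ne'])
  rw [map_smul_eq_mul, norm_inv, norm_norm, le_inv_mul_iff₀ hx'] at h
  linarith

theorem Seminorm.isBounded_setOf_le_one (p : Seminorm ℝ E) (hp : ∀ x, p x = 0 → x = 0) :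
    Bornology.IsBounded {x | p x ≤ 1} := by
  obtain ⟨c, hc, hle⟩ := p.exists_pos_mul_norm_le hp
  refine (Metric.isBounded_iff_subset_closedBall 0).mpr ⟨1 / c, fun x hx => ?_⟩
  rw [mem_closedBall_zero_iff, le_div_iff₀' hc]
  exact (hle x).trans hx

end FiniteDimensional

section Polar

variable {E : Type*} [NormedAddCommGroup E] [InnerProductSpace ℝ E] {p : Seminorm ℝ E}

theorem dualNorm_le_iff (hp : Bornology.IsBounded {x | p x ≤ 1}) {y : E} {r : ℝ} :
    dualNorm p y ≤ r ↔ ∀ x, p x ≤ 1 → ⟪x, y⟫_ℝ ≤ r := by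
  obtain ⟨R, hR⟩ := hp.exists_norm_le
  have hbdd : BddAbove {s | ∃ x, p x ≤ 1 ∧ s = ⟪x, y⟫_ℝ} := by
    refine ⟨R * ‖y‖, ?_⟩
    rintro _ ⟨x, hx, rfl⟩
    exact (real_inner_le_norm x y).trans (by gcongr; exact hR x hx)
  constructor
  · exact fun h x hx => (le_csSup hbdd ⟨x, hx, rfl⟩).trans h
  · exact fun h => csSup_le ⟨_, 0, by simp, rfl⟩ (by rintro _ ⟨x, hx, rfl⟩; exact h x hx)

theorem setOf_dualNorm_le_eq_biInter (hp : Bornology.IsBounded {x | p x ≤ 1}) (r : ℝ) :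
    {y | dualNorm p y ≤ r} = ⋂ x ∈ {x | p x ≤ 1}, {y | ⟪x, y⟫_ℝ ≤ r} := by
  ext y
  simp only [mem_ofPred_eq, mem_iInter, dualNorm_le_iff hp]

theorem isClosed_setOf_dualNorm_le (hp : Bornology.IsBounded {x | p x ≤ 1}) (r : ℝ) :
    IsClosed {y | dualNorm p y ≤ r} := by
  rw [setOf_dualNorm_le_eq_biInter hp]
  exact isClosed_biInter fun x _ => isClosed_le (continuous_const.inner continuous_id)
    continuous_const

theorem convex_setOf_dualNorm_le (hp : Bornology.IsBounded {x | p x ≤ 1}) (r : ℝ) :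
    Convex ℝ {y | dualNorm p y ≤ r} := by
  rw [setOf_dualNorm_le_eq_biInter hp]
  exact convex_iInter₂ fun x _ => convex_halfSpace_le (innerₛₗ ℝ x).isLinear r

theorem norm_le_of_dualNorm_le (hp : Bornology.IsBounded {x | p x ≤ 1}) {C : ℝ} (hC : 0 < C)
    (hpC : ∀ x, p x ≤ C * ‖x‖) {y : E} {r : ℝ} (hy : dualNorm p y ≤ r) : ‖y‖ ≤ C * r := by
  rcases eq_or_ne y 0 with rfl | hy0
  · simpa using mul_nonneg hC.le (by simpa using (dualNorm_le_iff hp).mp hy 0 (by simp))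
  have hy' : 0 < ‖y‖ := norm_pos_iff.mpr hy0
  have h := (dualNorm_le_iff hp).mp hy ((C * ‖y‖)⁻¹ • y) (by
    rw [map_smul_eq_mul, norm_inv, Real.norm_of_nonneg (by positivity)]
    exact inv_mul_le_one_of_le₀ (hpC y) (by positivity))
  rw [real_inner_smul_left, real_inner_self_eq_norm_sq] at h
  rwa [show (C * ‖y‖)⁻¹ * ‖y‖ ^ 2 = ‖y‖ / C by field_simp, div_le_iff₀' hC] at h

theorem isCompact_setOf_dualNorm_le [FiniteDimensional ℝ E] (hp : ∀ x, p x = 0 → x = 0)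
    (r : ℝ) : IsCompact {y | dualNorm p y ≤ r} := by
  have hb := p.isBounded_setOf_le_one hp
  obtain ⟨C, hC, hpC⟩ := p.bound_of_continuous_normedSpace p.continuous_of_finiteDimensional
  refine Metric.isCompact_of_isClosed_isBounded (isClosed_setOf_dualNorm_le hb r)
    ((Metric.isBounded_iff_subset_closedBall 0).mpr ⟨C * r, fun y hy => ?_⟩)
  exact mem_closedBall_zero_iff.mpr (norm_le_of_dualNorm_le hb hC hpC hy)

end Polar

theorem Convex.midpoint_mem_interior_of_frontier_extreme {E : Type*} [AddCommGroup E]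
    [Module ℝ E] [TopologicalSpace E] {D : Set E} (hD : Convex ℝ D)
    (hext : ∀ x ∈ frontier D, ∀ x₁ ∈ D, ∀ x₂ ∈ D, (2 : ℝ) • x = x₁ + x₂ → x = x₁ ∧ x = x₂)
    {x₁ x₂ : E} (h₁ : x₁ ∈ D) (h₂ : x₂ ∈ D) (hne : x₁ ≠ x₂) :
    midpoint ℝ x₁ x₂ ∈ interior D := by
  by_contra hint
  have hfront : midpoint ℝ x₁ x₂ ∈ frontier D := ⟨subset_closure (hD.midpoint_mem h₁ h₂), hint⟩
  obtain ⟨h, -⟩ := hext _ hfront x₁ h₁ x₂ h₂ (by rw [two_smul, midpoint_add_self])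
  exact hne ((midpoint_eq_left_iff ℝ).mp h)

section Minimizer

variable {E : Type*} [NormedAddCommGroup E] [NormedSpace ℝ E] (p : Seminorm ℝ E)

theorem Seminorm.notMem_interior_of_isMinOn_sub {D : Set E} {x₀ x : E}
    (hmin : IsMinOn (fun z => p (x₀ - z)) D x) (hpos : 0 < p (x₀ - x)) : x ∉ interior D := by
  intro hx
  have hnear : ∀ᶠ t in 𝓝[>] (0 : ℝ), x + t • (x₀ - x) ∈ D := by
    have hcont : Continuous fun t : ℝ => x + t • (x₀ - x) := by fun_prop
    have : Tendsto (fun t : ℝ => x + t • (x₀ - x)) (𝓝 0) (𝓝 x) := by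
      simpa using hcont.tendsto 0
    exact nhdsWithin_le_nhds (this (mem_interior_iff_mem_nhds.mp hx))
  obtain ⟨t, htD, ht0, ht1⟩ := (hnear.and (Ioo_mem_nhdsGT one_pos)).exists
  have hstep : p (x₀ - (x + t • (x₀ - x))) = (1 - t) * p (x₀ - x) := by
    rw [show x₀ - (x + t • (x₀ - x)) = (1 - t) • (x₀ - x) by module, map_smul_eq_mul,
      Real.norm_of_nonneg (by linarith)]
  have hle : p (x₀ - x) ≤ p (x₀ - (x + t • (x₀ - x))) := hmin htD
  nlinarith

theorem Seminorm.eq_of_isMinOn_sub (hp : ∀ x, p x = 0 → x = 0) {D : Set E} (hD : Convex ℝ D)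
    (hext : ∀ x ∈ frontier D, ∀ x₁ ∈ D, ∀ x₂ ∈ D, (2 : ℝ) • x = x₁ + x₂ → x = x₁ ∧ x = x₂)
    {x₀ : E} (hx₀ : x₀ ∉ D) {x₁ x₂ : E} (h₁ : x₁ ∈ D) (h₂ : x₂ ∈ D)
    (hmin₁ : IsMinOn (fun z => p (x₀ - z)) D x₁) (hmin₂ : IsMinOn (fun z => p (x₀ - z)) D x₂) :
    x₁ = x₂ := by
  by_contra hne
  have hint := hD.midpoint_mem_interior_of_frontier_extreme hext h₁ h₂ hne
  have hmid_le : p (x₀ - midpoint ℝ x₁ x₂) ≤ p (x₀ - x₁) := by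
    have h12 : p (x₀ - x₁) = p (x₀ - x₂) := le_antisymm (hmin₁ h₂) (hmin₂ h₁)
    calc p (x₀ - midpoint ℝ x₁ x₂) = 2⁻¹ * p ((x₀ - x₁) + (x₀ - x₂)) := by
          rw [midpoint_eq_smul_add, invOf_eq_inv,
            show x₀ - (2⁻¹ : ℝ) • (x₁ + x₂) = (2⁻¹ : ℝ) • ((x₀ - x₁) + (x₀ - x₂)) by module,
            map_smul_eq_mul, Real.norm_of_nonneg (by norm_num)]
      _ ≤ 2⁻¹ * (p (x₀ - x₁) + p (x₀ - x₂)) := by gcongr; exact map_add_le_add p _ _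
      _ = p (x₀ - x₁) := by rw [h12]; ring
  have hmid_min : IsMinOn (fun z => p (x₀ - z)) D (midpoint ℝ x₁ x₂) :=
    fun z hz => hmid_le.trans (hmin₁ hz)
  refine p.notMem_interior_of_isMinOn_sub hmid_min ?_ hint
  exact (apply_nonneg p _).lt_of_ne' fun h => hx₀ (sub_eq_zero.mp (hp _ h) ▸ interior_subset hint)

end Minimizer

/-- Let `E` be a finite-dimensional real inner product space, `ρ` a
norm on `E`, and `D = {x : ρ°(x) ≤ 1}`. If `x₀ ∉ D` and `D` is strictly convex
(every boundary point of `D` is an extreme point of `D`, where `x ∈ Ω` is extreme if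
`2x = x₁ + x₂` with `x₁, x₂ ∈ Ω` implies `x = x₁ = x₂`), then `x ↦ ρ(x₀ − x)` admits
a unique minimizer over `D`. -/
theorem stmt_11 {E : Type*} [NormedAddCommGroup E] [InnerProductSpace ℝ E]
    [FiniteDimensional ℝ E]
    (ρ : E → ℝ)
    (hρ_add : ∀ x y, ρ (x + y) ≤ ρ x + ρ y)
    (hρ_smul : ∀ (c : ℝ) (x : E), ρ (c • x) = |c| * ρ x)
    (hρ_def : ∀ x, ρ x = 0 → x = 0)
    (x₀ : E) (hx₀ : ¬ dualNorm ρ x₀ ≤ 1)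
    (hsc : ∀ x ∈ frontier {y : E | dualNorm ρ y ≤ 1},
      dualNorm ρ x ≤ 1 ∧
        ∀ x₁ : E, dualNorm ρ x₁ ≤ 1 → ∀ x₂ : E, dualNorm ρ x₂ ≤ 1 →
          (2 : ℝ) • x = x₁ + x₂ → x = x₁ ∧ x = x₂) :
    ∃! x : E, dualNorm ρ x ≤ 1 ∧
      ∀ z : E, dualNorm ρ z ≤ 1 → ρ (x₀ - x) ≤ ρ (x₀ - z) := by
  obtain ⟨p, rfl⟩ : ∃ p : Seminorm ℝ E, ⇑p = ρ :=
    ⟨Seminorm.of ρ hρ_add fun c x => by rw [hρ_smul, Real.norm_eq_abs], rfl⟩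
  have hb := p.isBounded_setOf_le_one hρ_def
  have h0 : dualNorm p 0 ≤ 1 := (dualNorm_le_iff hb).mpr fun x _ => by simp
  have hcont : Continuous fun z => p (x₀ - z) :=
    p.continuous_of_finiteDimensional.comp (continuous_const.sub continuous_id)
  obtain ⟨x, hxD, hxmin⟩ :=
    (isCompact_setOf_dualNorm_le hρ_def 1).exists_isMinOn ⟨0, h0⟩ hcont.continuousOn
  refine ⟨x, ⟨hxD, fun z hz => hxmin hz⟩, fun y ⟨hyD, hymin⟩ => ?_⟩
  exact p.eq_of_isMinOn_sub hρ_def (convex_setOf_dualNorm_le hb 1) (fun z hz => (hsc z hz).2)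
    hx₀ hyD hxD hymin hxmin
end

section
/- The dual norm of the norm ρ on ℝ² defined by ρ(x, y) = |x| + max(|x|, |y|) is given by ρ°(x, y) = ½|y| + ½ max(|x|, |y|); equivalently, ρ°(x, y) = |y| when |y| > |x| and ρ°(x, y) = ½(|x| + |y|) when |y| ≤ |x|. -/
private lemma sign_spec (t : ℝ) : ∃ s : ℝ, |s| = 1 ∧ s * t = |t| := by
  rcases le_or_gt 0 t with h | h
  · exact ⟨1, by norm_num, by rw [abs_of_nonneg h]; ring⟩
  · exact ⟨-1, by norm_num, by rw [abs_of_neg h]; ring⟩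

/-- The dual norm of the norm `ρ(x, y) = |x| + max(|x|, |y|)` on `ℝ²`
(with the standard inner product, `ρ°(y) = max {x·y : ρ(x) ≤ 1}`) is
`ρ°(x, y) = ½|y| + ½ max(|x|, |y|)`; equivalently `ρ°(x, y) = |y|` when `|y| > |x|`
and `ρ°(x, y) = ½(|x| + |y|)` when `|y| ≤ |x|`. -/
theorem stmt_13 (y : ℝ × ℝ) :
    (sSup {r : ℝ | ∃ p : ℝ × ℝ, |p.1| + max |p.1| |p.2| ≤ 1 ∧
          r = p.1 * y.1 + p.2 * y.2}
        = (1 / 2) * |y.2| + (1 / 2) * max |y.1| |y.2|)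
    ∧ (|y.1| < |y.2| →
        sSup {r : ℝ | ∃ p : ℝ × ℝ, |p.1| + max |p.1| |p.2| ≤ 1 ∧
            r = p.1 * y.1 + p.2 * y.2} = |y.2|)
    ∧ (|y.2| ≤ |y.1| →
        sSup {r : ℝ | ∃ p : ℝ × ℝ, |p.1| + max |p.1| |p.2| ≤ 1 ∧
            r = p.1 * y.1 + p.2 * y.2} = (1 / 2) * (|y.1| + |y.2|)) := by
  have hmain : sSup {r : ℝ | ∃ p : ℝ × ℝ, |p.1| + max |p.1| |p.2| ≤ 1 ∧
          r = p.1 * y.1 + p.2 * y.2}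
        = (1 / 2) * |y.2| + (1 / 2) * max |y.1| |y.2| := by
    apply IsGreatest.csSup_eq
    constructor
    · -- membership
      obtain ⟨s1, hs1, hs1y⟩ := sign_spec y.1
      obtain ⟨s2, hs2, hs2y⟩ := sign_spec y.2
      rcases le_total |y.1| |y.2| with h | h
      · refine ⟨(0, s2), ?_, ?_⟩
        · simp [hs2]
        · simp only [max_eq_right h]
          simp [hs2y]; ring
      · refine ⟨(s1 / 2, s2 / 2), ?_, ?_⟩
        · simp [abs_div, hs1, hs2]; norm_num
        · simp only [max_eq_left h]
          have : s1 / 2 * y.1 + s2 / 2 * y.2 = (s1 * y.1) / 2 + (s2 * y.2) / 2 := by ring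
          rw [this, hs1y, hs2y]; ring
    · -- upper bound
      rintro r ⟨p, hp, rfl⟩
      have h1 : p.1 * y.1 ≤ |p.1| * |y.1| := by
        calc p.1 * y.1 ≤ |p.1 * y.1| := le_abs_self _
        _ = |p.1| * |y.1| := abs_mul _ _
      have h2 : p.2 * y.2 ≤ |p.2| * |y.2| := by
        calc p.2 * y.2 ≤ |p.2 * y.2| := le_abs_self _
        _ = |p.2| * |y.2| := abs_mul _ _
      have ha := abs_nonneg p.1
      have hb := abs_nonneg p.2
      have hl : |p.1| + |p.1| ≤ 1 := le_trans (by simp [le_max_left]) hp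
      have hr : |p.1| + |p.2| ≤ 1 := le_trans (by simp [le_max_right]) hp
      rcases le_total |y.1| |y.2| with h | h
      · rw [max_eq_right h]
        nlinarith [abs_nonneg y.1, abs_nonneg y.2]
      · rw [max_eq_left h]
        nlinarith [abs_nonneg y.1, abs_nonneg y.2]
  refine ⟨hmain, fun h => ?_, fun h => ?_⟩
  · rw [hmain, max_eq_right h.le]; ring
  · rw [hmain, max_eq_left h]; ring
end

section
/- Let ρ be the norm on ℝ² defined by ρ(x, y) = |x| + max(|x|, |y|), and let A° = {(x, y) ∈ ℝ² : ½|y| + ½ max(|x|, |y|) ≤ 1}. For f = (2, 2), the set of minimizers of u ↦ ρ(f − u) over A° is exactly {(1 + t, 1 − t) : t ∈ [0, 1]}. In particular A° is not a Chebyshev set with respect to ρ. -/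
/-- The norm `ρ(x, y) = |x| + max(|x|, |y|)` on `ℝ²`. -/
noncomputable def rhoA (p : ℝ × ℝ) : ℝ := |p.1| + max |p.1| |p.2|

/-- The polar `A°` of the closed unit ball of `ρ`, i.e. the closed unit ball of the
dual norm `ρ°(x, y) = ½|y| + ½ max(|x|, |y|)`. -/
noncomputable def Apolar : Set (ℝ × ℝ) :=
  {p | (1 / 2) * |p.2| + (1 / 2) * max |p.1| |p.2| ≤ 1}

lemma rhoA_neg (p : ℝ × ℝ) : rhoA (-p) = rhoA p := by
  simp [rhoA]

lemma key (v : ℝ × ℝ) (hv : v ∈ Apolar) : 2 ≤ rhoA ((2, 2) - v) := by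
  obtain ⟨x, y⟩ := v
  simp only [Apolar, Set.mem_setOf_eq] at hv
  simp only [rhoA, Prod.mk_sub_mk]
  have e1 : (2:ℝ) ≤ |2 - x| + |x| := by
    calc (2:ℝ) = |(2 - x) + x| := by norm_num
    _ ≤ |2 - x| + |x| := abs_add_le _ _
  have e2 : (2:ℝ) ≤ |2 - y| + |y| := by
    calc (2:ℝ) = |(2 - y) + y| := by norm_num
    _ ≤ |2 - y| + |y| := abs_add_le _ _
  have m1 := le_max_right |2 - x| |2 - y|
  have m2 := le_max_left |x| |y|
  linarith

lemma forward (x y : ℝ) (hA : (1 / 2) * |y| + (1 / 2) * max |x| |y| ≤ 1)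
    (hmin : |2 - x| + max |2 - x| |2 - y| ≤ 2) :
    1 ≤ x ∧ x ≤ 2 ∧ x + y = 2 := by
  have e1 : (2:ℝ) ≤ |2 - x| + |x| := by
    calc (2:ℝ) = |(2 - x) + x| := by norm_num
    _ ≤ |2 - x| + |x| := abs_add_le _ _
  have e2 : (2:ℝ) ≤ |2 - y| + |y| := by
    calc (2:ℝ) = |(2 - y) + y| := by norm_num
    _ ≤ |2 - y| + |y| := abs_add_le _ _
  have m1l := le_max_left |2 - x| |2 - y|
  have m1r := le_max_right |2 - x| |2 - y|
  have m2l := le_max_left |x| |y|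
  have m2r := le_max_right |x| |y|
  -- derived tight facts
  have hsum : |2 - x| + |2 - y| ≤ 2 := by linarith
  have hxy2 : |x| + |y| ≤ 2 := by linarith
  have h2x : |2 - x| ≤ 1 := by linarith
  have h2xeq : |2 - x| = 2 - |x| := by linarith
  have h2yeq : |2 - y| = 2 - |y| := by linarith
  have hxyeq : |x| + |y| = 2 := by linarith
  have l1 := le_abs_self (2 - x)
  have l2 := le_abs_self (2 - y)
  have l3 := le_abs_self x
  have l4 := abs_nonneg y
  have l5 := le_abs_self y
  have hx : x = |x| := by linarith
  have hy : y = |y| := by linarith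
  refine ⟨by linarith, by linarith, by linarith⟩

/-- For the norm `ρ(x, y) = |x| + max(|x|, |y|)` on `ℝ²` and
`f = (2, 2)`, the set of minimizers of `u ↦ ρ(f − u)` over `A°` is exactly
`{(1 + t, 1 − t) : t ∈ [0, 1]}`; in particular `A°` is not a Chebyshev set with
respect to `ρ`. -/
theorem stmt_14 :
    ({u : ℝ × ℝ | u ∈ Apolar ∧
        ∀ v ∈ Apolar, rhoA ((2, 2) - u) ≤ rhoA ((2, 2) - v)}
      = {u : ℝ × ℝ | ∃ t ∈ Set.Icc (0 : ℝ) 1, u = (1 + t, 1 - t)})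
    ∧ ¬ (∀ x₀ : ℝ × ℝ, ∃! u : ℝ × ℝ, u ∈ Apolar ∧
        ∀ v ∈ Apolar, rhoA (u - x₀) ≤ rhoA (v - x₀)) := by
  have hseg : ∀ t : ℝ, t ∈ Set.Icc (0:ℝ) 1 →
      ((1 + t, 1 - t) : ℝ × ℝ) ∈ Apolar ∧ rhoA ((2, 2) - (1 + t, 1 - t)) = 2 := by
    intro t ht
    obtain ⟨ht0, ht1⟩ := ht
    have ha : |1 - t| = 1 - t := abs_of_nonneg (by linarith)
    have hb : |1 + t| = 1 + t := abs_of_nonneg (by linarith)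
    constructor
    · simp only [Apolar, Set.mem_setOf_eq, ha, hb]
      rw [max_eq_left (by linarith)]
      linarith
    · simp only [rhoA, Prod.mk_sub_mk]
      have : (2:ℝ) - (1 + t) = 1 - t := by ring
      rw [this]
      have : (2:ℝ) - (1 - t) = 1 + t := by ring
      rw [this, ha, hb, max_eq_right (by linarith)]
      ring
  constructor
  · ext u
    simp only [Set.mem_setOf_eq]
    constructor
    · rintro ⟨hA, hmin⟩
      obtain ⟨x, y⟩ := u
      have h11 : ((1, 1) : ℝ × ℝ) ∈ Apolar ∧ rhoA ((2, 2) - (1, 1)) = 2 := by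
        simpa using hseg 0 (by norm_num)
      have hle : rhoA ((2, 2) - (x, y)) ≤ 2 := by
        have := hmin (1, 1) h11.1
        rw [h11.2] at this
        exact this
      simp only [rhoA, Prod.mk_sub_mk] at hle
      simp only [Apolar, Set.mem_setOf_eq] at hA
      obtain ⟨h1, h2, h3⟩ := forward x y hA hle
      refine ⟨x - 1, ⟨by linarith, by linarith⟩, ?_⟩
      rw [Prod.mk.injEq]
      exact ⟨by ring, by linarith⟩
    · rintro ⟨t, ht, rfl⟩
      obtain ⟨hmem, hval⟩ := hseg t ht
      refine ⟨hmem, fun v hv => ?_⟩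
      rw [hval]
      exact key v hv
  · intro h
    obtain ⟨u, _, huniq⟩ := h (2, 2)
    have P : ∀ w : ℝ × ℝ, w ∈ Apolar → rhoA ((2, 2) - w) = 2 →
        (w ∈ Apolar ∧ ∀ v ∈ Apolar, rhoA (w - (2, 2)) ≤ rhoA (v - (2, 2))) := by
      intro w hw hwval
      refine ⟨hw, fun v hv => ?_⟩
      have hw' : rhoA (w - (2, 2)) = 2 := by
        rw [← rhoA_neg, neg_sub]; exact hwval
      have hv' : 2 ≤ rhoA (v - (2, 2)) := by
        rw [← rhoA_neg, neg_sub]; exact key v hv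
      linarith
    have h1 := P (1, 1) (by norm_num [Apolar])
      (by norm_num [rhoA])
    have h2 := P (2, 0) (by norm_num [Apolar])
      (by norm_num [rhoA])
    have e1 := huniq (1, 1) h1
    have e2 := huniq (2, 0) h2
    have : ((1, 1) : ℝ × ℝ) = (2, 0) := e1.trans e2.symm
    simp [Prod.ext_iff] at this
end

section
/- Let ρ be the norm on ℝ² defined by ρ(x, y) = |x| + max(|x|, |y|). There exists f₀ ∈ ℝ² such that the problem inf{ρ(f₀ − x) + ρ*(x) : x ∈ ℝ²} admits infinitely many minimizers. -/
/-- Legendre transform of `ρ` (with the standard inner product on `ℝ²`), valued in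
`EReal`: `ρ*(y) = sup {x·y − ρ(x) : x ∈ ℝ²}`. -/
noncomputable def rhoAStar (y : ℝ × ℝ) : EReal :=
  ⨆ x : ℝ × ℝ, ((x.1 * y.1 + x.2 * y.2 - rhoA x : ℝ) : EReal)

lemma coe_sub_rhoA_le_rhoAStar (x y : ℝ × ℝ) :
    ((x.1 * y.1 + x.2 * y.2 - rhoA x : ℝ) : EReal) ≤ rhoAStar y :=
  le_iSup (fun x : ℝ × ℝ => ((x.1 * y.1 + x.2 * y.2 - rhoA x : ℝ) : EReal)) x

lemma rhoAStar_eq_zero_of_forall_le {y : ℝ × ℝ}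
    (hy : ∀ x : ℝ × ℝ, x.1 * y.1 + x.2 * y.2 ≤ rhoA x) : rhoAStar y = 0 := by
  refine le_antisymm (iSup_le fun x => ?_) ?_
  · exact_mod_cast sub_nonpos.2 (hy x)
  · simpa [rhoA] using coe_sub_rhoA_le_rhoAStar 0 y

lemma mul_add_mul_le_rhoA {s : ℝ} (hs0 : 0 ≤ s) (hs1 : s ≤ 1) (x : ℝ × ℝ) :
    x.1 * (2 - s) + x.2 * s ≤ rhoA x := by
  have h1 : x.1 ≤ |x.1| := le_abs_self _
  have h2 : x.2 ≤ |x.2| := le_abs_self _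
  have h3 : |x.1| ≤ max |x.1| |x.2| := le_max_left _ _
  have h4 : |x.2| ≤ max |x.1| |x.2| := le_max_right _ _
  unfold rhoA
  nlinarith [abs_nonneg x.1]

lemma one_le_rhoA_sub_add_rhoAStar (z : ℝ × ℝ) :
    (1 : EReal) ≤ (rhoA ((2, 1) - z) : EReal) + rhoAStar z := by
  have hdist : 3 ≤ z.1 + z.2 + rhoA ((2, 1) - z) := by
    have := mul_add_mul_le_rhoA zero_le_one le_rfl ((2, 1) - z)
    simp only [Prod.fst_sub, Prod.snd_sub] at this
    linarith
  have hρ : rhoA (1, 1) = 2 := by norm_num [rhoA]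
  calc (1 : EReal)
      ≤ ((rhoA ((2, 1) - z) + (1 * z.1 + 1 * z.2 - rhoA (1, 1)) : ℝ) : EReal) := by
        exact_mod_cast (by rw [hρ]; linarith)
    _ = (rhoA ((2, 1) - z) : EReal) + ((1 * z.1 + 1 * z.2 - rhoA (1, 1) : ℝ) : EReal) :=
        EReal.coe_add _ _
    _ ≤ (rhoA ((2, 1) - z) : EReal) + rhoAStar z :=
        add_le_add le_rfl (coe_sub_rhoA_le_rhoAStar (1, 1) z)

lemma rhoA_sub_eq_one {s : ℝ} (hs0 : 0 ≤ s) (hs1 : s ≤ 1 / 2) :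
    rhoA ((2, 1) - (2 - s, s)) = 1 := by
  have h : ((2, 1) - (2 - s, s) : ℝ × ℝ) = (s, 1 - s) := by ext <;> simp
  rw [h, rhoA, abs_of_nonneg hs0, abs_of_nonneg (by linarith : (0 : ℝ) ≤ 1 - s),
    max_eq_right (by linarith : s ≤ 1 - s)]
  ring

/-- For the norm `ρ(x, y) = |x| + max(|x|, |y|)` on `ℝ²`, there
exists `f₀ ∈ ℝ²` such that the problem `inf {ρ(f₀ − x) + ρ*(x) : x ∈ ℝ²}` admits
infinitely many minimizers. -/
theorem stmt_15 :
    ∃ f₀ : ℝ × ℝ,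
      {x : ℝ × ℝ | ∀ z : ℝ × ℝ,
          (↑(rhoA (f₀ - x)) : EReal) + rhoAStar x
            ≤ (↑(rhoA (f₀ - z)) : EReal) + rhoAStar z}.Infinite := by
  refine ⟨(2, 1), Set.Infinite.mono ?_ ((Set.Icc_infinite (by norm_num : (0 : ℝ) < 1 / 2)).image
    (f := fun s : ℝ => ((2 - s, s) : ℝ × ℝ)) fun a _ b _ h => (Prod.mk.inj h).2)⟩
  rintro _ ⟨s, ⟨hs0, hs1⟩, rfl⟩ z
  beta_reduce
  rw [rhoA_sub_eq_one hs0 hs1,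
    rhoAStar_eq_zero_of_forall_le (mul_add_mul_le_rhoA hs0 (by linarith)), add_zero]
  exact one_le_rhoA_sub_add_rhoAStar z
end

section
/- Let E be a finite-dimensional real inner product space, Ω ⊆ E a nonempty, closed, bounded and convex set, and ρ a norm on E. The following are equivalent: (i) there exists x₀ ∈ E for which the problem inf{ρ(x₀ − x) : x ∈ Ω} has more than one minimizer; (ii) there exist a nonzero vector a ∈ E, distinct points w₁, w₂ ∈ Ω, points u₁, u₂ on the unit sphere {u : ρ(u) = 1}, and a real number r ≠ 0 such that: (a) Ω ⊆ {x : x·a ≥ w₁·a} and the segment [w₁, w₂] ⊆ {x : x·a = w₁·a}; (b) the closed unit ball {x : ρ(x) ≤ 1} ⊆ {x : x·a ≤ u₁·a} and the segment [u₁, u₂] ⊆ {x : x·a = u₁·a}; (c) w₁ − w₂ = r(u₁ − u₂). -/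
/-!
If `w₁ ≠ w₂` both minimise `ρ (x₀ - ·)` on `Ω`, at distance `d > 0`, then the open `ρ`-ball of
radius `d` about `x₀` misses `Ω`, and Hahn–Banach separates the two convex sets by a hyperplane
`{x | x·a = c}`. Both `wᵢ` lie on it, and rescaling the closed ball to the unit ball turns it into a
hyperplane supporting the unit ball at `uᵢ = (wᵢ - x₀) / d`; then `w₁ - w₂ = d (u₁ - u₂)`.
Conversely, for `r > 0` the point `x₀ = w₁ - r u₁ = w₂ - r u₂` is at distance `r` from both `wᵢ`,
while for `z ∈ Ω` we have `r (u₁·a) ≤ (z - x₀)·a ≤ (u₁·a) ρ (z - x₀)` with `u₁·a > 0`.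
-/

open Filter Topology
open scoped RealInnerProductSpace

theorem Seminorm.closedBall_subset_closure_ball {E : Type*} [AddCommGroup E] [Module ℝ E]
    [TopologicalSpace E] [ContinuousAdd E] [ContinuousSMul ℝ E]
    (p : Seminorm ℝ E) (x : E) {r : ℝ} (hr : 0 < r) :
    p.closedBall x r ⊆ closure (p.ball x r) := by
  intro y hy
  have hpath : Tendsto (fun t : ℝ => x + t • (y - x)) (𝓝[<] 1) (𝓝 y) := by
    refine Tendsto.mono_left ?_ nhdsWithin_le_nhds
    exact (continuous_const.add (continuous_id.smul continuous_const)).tendsto' 1 y (by simp)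
  refine mem_closure_of_tendsto hpath ?_
  filter_upwards [Ioo_mem_nhdsLT zero_lt_one] with t ⟨ht₀, ht₁⟩
  rw [Seminorm.mem_closedBall] at hy
  rw [Seminorm.mem_ball, add_sub_cancel_left, map_smul_eq_mul, Real.norm_of_nonneg ht₀.le]
  calc t * p (y - x) ≤ t * r := by gcongr
    _ < r := by nlinarith

section InnerProductSpace

variable {E : Type*} [NormedAddCommGroup E] [InnerProductSpace ℝ E]

theorem inner_eq_of_mem_segment {a w₁ w₂ : E} (h : ⟪w₂, a⟫ = ⟪w₁, a⟫) :
    ∀ x ∈ segment ℝ w₁ w₂, ⟪x, a⟫ = ⟪w₁, a⟫ := by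
  rintro x ⟨s, t, -, -, hst, rfl⟩
  rw [inner_add_left, real_inner_smul_left, real_inner_smul_left, h, ← add_mul, hst, one_mul]

variable {p : Seminorm ℝ E}

theorem inner_le_mul_seminorm (hp : ∀ x, p x = 0 → x = 0) {a : E} {c : ℝ}
    (hB : ∀ x, p x ≤ 1 → ⟪x, a⟫ ≤ c) (v : E) : ⟪v, a⟫ ≤ c * p v := by
  rcases eq_or_ne v 0 with rfl | hv
  · simp
  have hpv : 0 < p v := (apply_nonneg p v).lt_of_ne' (mt (hp v) hv)
  have := hB ((p v)⁻¹ • v) (by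
    rw [map_smul_eq_mul, Real.norm_of_nonneg (by positivity), inv_mul_cancel₀ hpv.ne'])
  rw [real_inner_smul_left, inv_mul_le_iff₀ hpv] at this
  linarith

theorem pos_of_forall_inner_le (hp : ∀ x, p x = 0 → x = 0) {a : E} (ha : a ≠ 0) {c : ℝ}
    (hB : ∀ x, p x ≤ 1 → ⟪x, a⟫ ≤ c) : 0 < c := by
  have h := inner_le_mul_seminorm hp hB a
  exact pos_of_mul_pos_left ((real_inner_self_pos.2 ha).trans_le h) (apply_nonneg p a)

theorem le_seminorm_sub_of_supporting (hp : ∀ x, p x = 0 → x = 0) {Ω : Set E} {a w u : E}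
    (ha : a ≠ 0) (hΩ : ∀ z ∈ Ω, ⟪w, a⟫ ≤ ⟪z, a⟫) (hB : ∀ x, p x ≤ 1 → ⟪x, a⟫ ≤ ⟪u, a⟫)
    (s : ℝ) {z : E} (hz : z ∈ Ω) : s ≤ p (w - s • u - z) := by
  have hc := pos_of_forall_inner_le hp ha hB
  have hlow : s * ⟪u, a⟫ ≤ ⟪z - (w - s • u), a⟫ := by
    rw [inner_sub_left, inner_sub_left, real_inner_smul_left]
    linarith [hΩ z hz]
  have hup := inner_le_mul_seminorm hp hB (z - (w - s • u))
  rw [map_sub_rev] at hup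
  exact le_of_mul_le_mul_left (by linarith) hc

theorem two_minimizers_of_supporting_hyperplanes (hp : ∀ x, p x = 0 → x = 0) {Ω : Set E}
    {a w₁ w₂ u₁ u₂ : E} (ha : a ≠ 0) (hΩ : ∀ z ∈ Ω, ⟪w₁, a⟫ ≤ ⟪z, a⟫)
    (hB : ∀ x, p x ≤ 1 → ⟪x, a⟫ ≤ ⟪u₁, a⟫) (hu₁ : p u₁ = 1) (hu₂ : p u₂ = 1) {s : ℝ}
    (hs : 0 ≤ s) (hw : w₁ - w₂ = s • (u₁ - u₂)) :
    (∀ z ∈ Ω, p (w₁ - s • u₁ - w₁) ≤ p (w₁ - s • u₁ - z)) ∧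
      (∀ z ∈ Ω, p (w₁ - s • u₁ - w₂) ≤ p (w₁ - s • u₁ - z)) := by
  have hdist : ∀ u, p u = 1 → p (-(s • u)) = s := fun u hu => by
    rw [map_neg_eq_map, map_smul_eq_mul, hu, Real.norm_of_nonneg hs, mul_one]
  have h₁ : w₁ - s • u₁ - w₁ = -(s • u₁) := by abel
  have h₂ : w₁ - s • u₁ - w₂ = -(s • u₂) := by rw [sub_right_comm, hw]; module
  rw [h₁, h₂, hdist u₁ hu₁, hdist u₂ hu₂]
  exact ⟨fun z hz => le_seminorm_sub_of_supporting hp ha hΩ hB s hz,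
    fun z hz => le_seminorm_sub_of_supporting hp ha hΩ hB s hz⟩

variable [FiniteDimensional ℝ E]

theorem exists_inner_separating_closedBall {Ω : Set E} (hΩ : Convex ℝ Ω) {x₀ : E} {d : ℝ}
    (hd : 0 < d) (hmin : ∀ z ∈ Ω, d ≤ p (x₀ - z)) :
    ∃ a : E, ∃ u : ℝ, ⟪x₀, a⟫ < u ∧ (∀ y ∈ p.closedBall x₀ d, ⟪y, a⟫ ≤ u) ∧
      ∀ z ∈ Ω, u ≤ ⟪z, a⟫ := by
  have hcont : Continuous p := p.convexOn.locallyLipschitz.continuous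
  have hopen : IsOpen (p.ball x₀ d) :=
    isOpen_lt (hcont.comp (continuous_id.sub continuous_const)) continuous_const
  have hdisj : Disjoint (p.ball x₀ d) Ω := by
    refine Set.disjoint_left.2 fun z hz hzΩ => ?_
    rw [Seminorm.mem_ball, map_sub_rev] at hz
    exact (hmin z hzΩ).not_gt hz
  obtain ⟨f, u, hball, hΩu⟩ := geometric_hahn_banach_open (p.convex_ball x₀ d) hopen hΩ hdisj
  have hclosed : p.closedBall x₀ d ⊆ {y | f y ≤ u} :=
    (p.closedBall_subset_closure_ball x₀ hd).trans <|
      closure_minimal (fun y hy => (hball y hy).le) (isClosed_le f.continuous continuous_const)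
  have hf : ∀ y, ⟪y, (InnerProductSpace.toDual ℝ E).symm f⟫ = f y := fun y => by
    rw [real_inner_comm, InnerProductSpace.toDual_symm_apply]
  refine ⟨(InnerProductSpace.toDual ℝ E).symm f, u, ?_, ?_, ?_⟩ <;> simp only [hf]
  · exact hball x₀ (p.mem_ball_self hd)
  · exact hclosed
  · exact hΩu

theorem exists_supporting_hyperplanes_of_two_minimizers (hp : ∀ x, p x = 0 → x = 0)
    {Ω : Set E} (hΩ : Convex ℝ Ω) {x₀ w₁ w₂ : E} (hw₁ : w₁ ∈ Ω) (hw₂ : w₂ ∈ Ω) (hne : w₁ ≠ w₂)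
    (h₁ : ∀ z ∈ Ω, p (x₀ - w₁) ≤ p (x₀ - z)) (h₂ : ∀ z ∈ Ω, p (x₀ - w₂) ≤ p (x₀ - z)) :
    ∃ a : E, a ≠ 0 ∧ ∃ u₁ u₂ : E, p u₁ = 1 ∧ p u₂ = 1 ∧ ∃ r : ℝ, r ≠ 0 ∧
      (∀ x ∈ Ω, ⟪w₁, a⟫ ≤ ⟪x, a⟫) ∧ (∀ x ∈ segment ℝ w₁ w₂, ⟪x, a⟫ = ⟪w₁, a⟫) ∧
      (∀ x, p x ≤ 1 → ⟪x, a⟫ ≤ ⟪u₁, a⟫) ∧ (∀ x ∈ segment ℝ u₁ u₂, ⟪x, a⟫ = ⟪u₁, a⟫) ∧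
      w₁ - w₂ = r • (u₁ - u₂) := by
  set d := p (x₀ - w₁)
  have hd₂ : p (x₀ - w₂) = d := le_antisymm (h₂ w₁ hw₁) (h₁ w₂ hw₂)
  have hd : 0 < d := (apply_nonneg p _).lt_of_ne' fun h =>
    hne ((sub_eq_zero.1 (hp _ h)).symm.trans (sub_eq_zero.1 (hp _ (hd₂.trans h))))
  obtain ⟨a, u, hx₀, hball, hΩu⟩ := exists_inner_separating_closedBall hΩ hd h₁
  have hsphere : ∀ w ∈ Ω, p (x₀ - w) = d → ⟪w, a⟫ = u := fun w hw hwd =>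
    le_antisymm (hball w (by rw [Seminorm.mem_closedBall, map_sub_rev, hwd])) (hΩu w hw)
  have hunit : ∀ w, p (x₀ - w) = d → p (d⁻¹ • (w - x₀)) = 1 := fun w hwd => by
    rw [map_smul_eq_mul, map_sub_rev, hwd, Real.norm_of_nonneg (by positivity),
      inv_mul_cancel₀ hd.ne']
  have hval : ∀ w ∈ Ω, p (x₀ - w) = d → ⟪d⁻¹ • (w - x₀), a⟫ = d⁻¹ * (u - ⟪x₀, a⟫) :=
    fun w hw hwd => by rw [real_inner_smul_left, inner_sub_left, hsphere w hw hwd]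
  have hB : ∀ x, p x ≤ 1 → ⟪x, a⟫ ≤ d⁻¹ * (u - ⟪x₀, a⟫) := fun x hx => by
    have := hball (x₀ + d • x) (by
      rw [Seminorm.mem_closedBall, add_sub_cancel_left, map_smul_eq_mul,
        Real.norm_of_nonneg hd.le]
      exact mul_le_of_le_one_right hd.le hx)
    rw [inner_add_left, real_inner_smul_left] at this
    rw [le_inv_mul_iff₀ hd]
    linarith
  have ha : a ≠ 0 := by
    rintro rfl
    simp only [inner_zero_right] at hx₀ hΩu
    exact (hΩu w₁ hw₁).not_gt hx₀
  refine ⟨a, ha, d⁻¹ • (w₁ - x₀), d⁻¹ • (w₂ - x₀), hunit w₁ rfl, hunit w₂ hd₂, d, hd.ne',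
    fun x hx => (hsphere w₁ hw₁ rfl).trans_le (hΩu x hx),
    inner_eq_of_mem_segment ((hsphere w₂ hw₂ hd₂).trans (hsphere w₁ hw₁ rfl).symm),
    fun x hx => (hval w₁ hw₁ rfl).symm ▸ hB x hx,
    inner_eq_of_mem_segment ((hval w₂ hw₂ hd₂).trans (hval w₁ hw₁ rfl).symm), ?_⟩
  rw [← smul_sub, smul_smul, mul_inv_cancel₀ hd.ne', one_smul]
  abel

end InnerProductSpace

theorem stmt_16_general {E : Type*} [NormedAddCommGroup E] [InnerProductSpace ℝ E]
    [FiniteDimensional ℝ E]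
    (Ω : Set E) (hΩconv : Convex ℝ Ω)
    (ρ : E → ℝ)
    (hρ_add : ∀ x y, ρ (x + y) ≤ ρ x + ρ y)
    (hρ_smul : ∀ (c : ℝ) (x : E), ρ (c • x) = |c| * ρ x)
    (hρ_def : ∀ x, ρ x = 0 → x = 0) :
    (∃ x₀ : E, ∃ w₁ ∈ Ω, ∃ w₂ ∈ Ω, w₁ ≠ w₂ ∧
        (∀ z ∈ Ω, ρ (x₀ - w₁) ≤ ρ (x₀ - z)) ∧
        (∀ z ∈ Ω, ρ (x₀ - w₂) ≤ ρ (x₀ - z)))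
    ↔ (∃ a : E, a ≠ 0 ∧ ∃ w₁ ∈ Ω, ∃ w₂ ∈ Ω, w₁ ≠ w₂ ∧
        ∃ u₁ u₂ : E, ρ u₁ = 1 ∧ ρ u₂ = 1 ∧ ∃ r : ℝ, r ≠ 0 ∧
          (∀ x ∈ Ω, (inner ℝ w₁ a : ℝ) ≤ (inner ℝ x a : ℝ)) ∧
          (∀ x ∈ segment ℝ w₁ w₂, (inner ℝ x a : ℝ) = (inner ℝ w₁ a : ℝ)) ∧
          (∀ x : E, ρ x ≤ 1 → (inner ℝ x a : ℝ) ≤ (inner ℝ u₁ a : ℝ)) ∧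
          (∀ x ∈ segment ℝ u₁ u₂, (inner ℝ x a : ℝ) = (inner ℝ u₁ a : ℝ)) ∧
          w₁ - w₂ = r • (u₁ - u₂)) := by
  let p : Seminorm ℝ E := .of ρ hρ_add fun c x => by rw [hρ_smul, Real.norm_eq_abs]
  constructor
  · rintro ⟨x₀, w₁, hw₁, w₂, hw₂, hne, h₁, h₂⟩
    obtain ⟨a, ha, u₁, u₂, hu₁, hu₂, r, hr, hΩ⟩ :=
      exists_supporting_hyperplanes_of_two_minimizers (p := p) hρ_def hΩconv hw₁ hw₂ hne h₁ h₂
    exact ⟨a, ha, w₁, hw₁, w₂, hw₂, hne, u₁, u₂, hu₁, hu₂, r, hr, hΩ⟩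
  · rintro ⟨a, ha, w₁, hw₁, w₂, hw₂, hne, u₁, u₂, hu₁, hu₂, r, hr, hΩ, -, hB, hBseg, hw⟩
    rcases hr.lt_or_gt with hr | hr
    · have hB₂ : ∀ x, p x ≤ 1 → ⟪x, a⟫ ≤ ⟪u₂, a⟫ :=
        hBseg u₂ (right_mem_segment ℝ u₁ u₂) ▸ hB
      obtain ⟨h₁, h₂⟩ := two_minimizers_of_supporting_hyperplanes (p := p) hρ_def ha hΩ hB₂
        hu₂ hu₁ (neg_nonneg.2 hr.le) (by rw [hw]; module)
      exact ⟨_, w₁, hw₁, w₂, hw₂, hne, h₁, h₂⟩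
    · obtain ⟨h₁, h₂⟩ := two_minimizers_of_supporting_hyperplanes (p := p) hρ_def ha hΩ hB
        hu₁ hu₂ hr.le hw
      exact ⟨_, w₁, hw₁, w₂, hw₂, hne, h₁, h₂⟩

/-- Let `E` be a finite-dimensional real inner product space,
`Ω ⊆ E` nonempty, closed, bounded and convex, and `ρ` a norm on `E`. TFAE:
(i) there exists `x₀ ∈ E` for which `inf {ρ(x₀ − x) : x ∈ Ω}` has more than one
minimizer; (ii) there exist a nonzero `a ∈ E`, distinct `w₁, w₂ ∈ Ω`, points
`u₁, u₂` with `ρ(u₁) = ρ(u₂) = 1`, and `r ≠ 0` such that (a) `Ω ⊆ {x : x·a ≥ w₁·a}`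
and `[w₁, w₂] ⊆ {x : x·a = w₁·a}`; (b) `{x : ρ(x) ≤ 1} ⊆ {x : x·a ≤ u₁·a}` and
`[u₁, u₂] ⊆ {x : x·a = u₁·a}`; (c) `w₁ − w₂ = r (u₁ − u₂)`. -/
theorem stmt_16 {E : Type*} [NormedAddCommGroup E] [InnerProductSpace ℝ E]
    [FiniteDimensional ℝ E]
    (Ω : Set E) (hΩne : Ω.Nonempty) (hΩclosed : IsClosed Ω)
    (hΩbdd : Bornology.IsBounded Ω) (hΩconv : Convex ℝ Ω)
    (ρ : E → ℝ)
    (hρ_add : ∀ x y, ρ (x + y) ≤ ρ x + ρ y)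
    (hρ_smul : ∀ (c : ℝ) (x : E), ρ (c • x) = |c| * ρ x)
    (hρ_def : ∀ x, ρ x = 0 → x = 0) :
    (∃ x₀ : E, ∃ w₁ ∈ Ω, ∃ w₂ ∈ Ω, w₁ ≠ w₂ ∧
        (∀ z ∈ Ω, ρ (x₀ - w₁) ≤ ρ (x₀ - z)) ∧
        (∀ z ∈ Ω, ρ (x₀ - w₂) ≤ ρ (x₀ - z)))
    ↔ (∃ a : E, a ≠ 0 ∧ ∃ w₁ ∈ Ω, ∃ w₂ ∈ Ω, w₁ ≠ w₂ ∧
        ∃ u₁ u₂ : E, ρ u₁ = 1 ∧ ρ u₂ = 1 ∧ ∃ r : ℝ, r ≠ 0 ∧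
          (∀ x ∈ Ω, (inner ℝ w₁ a : ℝ) ≤ (inner ℝ x a : ℝ)) ∧
          (∀ x ∈ segment ℝ w₁ w₂, (inner ℝ x a : ℝ) = (inner ℝ w₁ a : ℝ)) ∧
          (∀ x : E, ρ x ≤ 1 → (inner ℝ x a : ℝ) ≤ (inner ℝ u₁ a : ℝ)) ∧
          (∀ x ∈ segment ℝ u₁ u₂, (inner ℝ x a : ℝ) = (inner ℝ u₁ a : ℝ)) ∧
          w₁ - w₂ = r • (u₁ - u₂)) :=
  stmt_16_general Ω hΩconv ρ hρ_add hρ_smul hρ_def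
end
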